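/- Let G be the 3-SAT reinforcement construction (triangles {u_i, ū_i, v_i}, clause vertices c_j adjacent to their three literals, and a vertex s joined to all c_j), where no clause contains both a variable and its negation. If e is a non-edge of G with γ(G + e) = n, then every minimum dominating set D_e of G + e satisfies |D_e ∩ {u_i, ū_i, v_i}| = 1 for every i = 1,…,n and c_j ∉ D_e for every j = 1,…,m. -/

import Mathlib

/-- A literal over `n` variables: a variable index together with a polarity
(`true` = the positive literal `uᵢ`, `false` = the negated literal `ūᵢ`). -/
abbrev Lit (n : ℕ) := Fin n × Bool

/-- Vertex type of the reinforcement construction: literal vertices `uᵢ, ūᵢ`,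
triangle apexes `vᵢ`, clause vertices `cⱼ`, and the single vertex `s`. -/
abbrev RVert (n m : ℕ) := Lit n ⊕ (Fin n ⊕ (Fin m ⊕ Unit))

/-- The literal vertex `uᵢ` (if `b = true`) or `ūᵢ` (if `b = false`). -/
def rlit {n m : ℕ} (i : Fin n) (b : Bool) : RVert n m := Sum.inl (i, b)

/-- The triangle apex vertex `vᵢ`. -/
def rvv {n m : ℕ} (i : Fin n) : RVert n m := Sum.inr (Sum.inl i)

/-- The clause vertex `cⱼ`. -/
def rcv {n m : ℕ} (j : Fin m) : RVert n m := Sum.inr (Sum.inr (Sum.inl j))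

/-- The vertex `s`. -/
def rsv {n m : ℕ} : RVert n m := Sum.inr (Sum.inr (Sum.inr ()))

/-- Base adjacency relation of the reinforcement construction (symmetrized by
`fromRel`): triangle edges on `{uᵢ, ūᵢ, vᵢ}`, clause edges joining `cⱼ` to its
three literals, and the edges joining `s` to every `cⱼ`. -/
def reinfRel {n m : ℕ} (C : Fin m → Fin 3 → Lit n) : RVert n m → RVert n m → Prop
  | Sum.inl (i, b), Sum.inl (i', b') => i = i' ∧ b ≠ b'
  | Sum.inl (i, _), Sum.inr (Sum.inl i') => i = i'
  | Sum.inl l, Sum.inr (Sum.inr (Sum.inl j)) => ∃ k, C j k = l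
  | Sum.inr (Sum.inr (Sum.inl _)), Sum.inr (Sum.inr (Sum.inr _)) => True
  | _, _ => False

/-- The graph of the reinforcement construction associated with a 3-SAT instance `C`. -/
def reinfGraph {n m : ℕ} (C : Fin m → Fin 3 → Lit n) : SimpleGraph (RVert n m) :=
  SimpleGraph.fromRel (reinfRel C)

/-- `D` is a dominating set of `G`: every vertex not in `D` has a neighbor in `D`. -/
def IsDomSet {V : Type*} (G : SimpleGraph V) (D : Finset V) : Prop :=
  ∀ v, v ∉ D → ∃ u ∈ D, G.Adj u v

/-- The domination number of `G`: the minimum cardinality of a dominating set. -/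
noncomputable def domNum {V : Type*} (G : SimpleGraph V) : ℕ :=
  sInf {k | ∃ D : Finset V, IsDomSet G D ∧ D.card = k}


/-!
A vertex `vᵢ` has no neighbours outside its triangle, so a dominating set of `G + e` missing the
triangle `{uᵢ, ūᵢ, vᵢ}` must use the new edge `e` to dominate `vᵢ`. Then `e` is of no help to any
other vertex outside `D`: `uᵢ` and `ūᵢ` need two different clause vertices (no clause contains
both), and every other triangle still needs a vertex of its own. That makes at least `n + 1`
vertices, so a dominating set of size `n` meets every triangle, hence meets each exactly once and
contains nothing else.
-/

open SimpleGraph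

namespace IsDomSet

variable {V : Type*} {G : SimpleGraph V} {D : Finset V}

lemma exists_adj_or_sym2_eq {u v x : V} (hD : IsDomSet (G ⊔ fromEdgeSet {s(u, v)}) D)
    (hx : x ∉ D) : (∃ y ∈ D, G.Adj y x) ∨ ∃ y ∈ D, s(u, v) = s(x, y) := by
  obtain ⟨y, hy, hyx⟩ := hD x hx
  rcases hyx with hyx | ⟨hyx, -⟩
  · exact .inl ⟨y, hy, hyx⟩
  · exact .inr ⟨y, hy, by rw [← Set.mem_singleton_iff.1 hyx, Sym2.eq_swap]⟩

lemma exists_adj_of_ne {a w x : V} (hD : IsDomSet (G ⊔ fromEdgeSet {s(a, w)}) D) (hw : w ∈ D)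
    (hx : x ∉ D) (hxa : x ≠ a) : ∃ y ∈ D, G.Adj y x := by
  refine (hD.exists_adj_or_sym2_eq hx).resolve_right ?_
  rintro ⟨y, -, hxy⟩
  rcases Sym2.eq_iff.1 hxy with ⟨rfl, -⟩ | ⟨-, rfl⟩
  exacts [hxa rfl, hx hw]

end IsDomSet

lemma Finset.card_eq_card_filter_none_add_sum {α ι : Type*} [Fintype ι] [DecidableEq ι]
    (f : α → Option ι) (s : Finset α) :
    s.card = (s.filter (f · = none)).card + ∑ i, (s.filter (f · = some i)).card := by
  rw [card_eq_sum_card_fiberwise (t := univ) fun x _ => mem_univ (f x), Fintype.sum_option]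

variable {n m : ℕ} {C : Fin m → Fin 3 → Lit n}

def triangleIdx : RVert n m → Option (Fin n)
  | Sum.inl (i, _) => some i
  | Sum.inr (Sum.inl i) => some i
  | _ => none

lemma filter_triangleIdx_eq_inter (D : Finset (RVert n m)) (i : Fin n) :
    D.filter (triangleIdx · = some i) = D ∩ {rlit i true, rlit i false, rvv i} := by
  ext x
  rcases x with ⟨i', _ | _⟩ | i' | _ | _ <;>
    simp [triangleIdx, rlit, rvv, eq_comm]

lemma eq_rlit_of_adj_rvv {a : RVert n m} {i : Fin n} (h : (reinfGraph C).Adj a (rvv i)) :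
    a = rlit i true ∨ a = rlit i false := by
  rw [reinfGraph, fromRel_adj] at h
  obtain ⟨-, h | h⟩ := h <;>
  rcases a with ⟨i', _ | _⟩ | i' | j' | _ <;>
  simp_all [reinfRel, rlit, rvv]

lemma eq_of_adj_rlit {a : RVert n m} {i : Fin n} {b : Bool} (h : (reinfGraph C).Adj a (rlit i b)) :
    a = rlit i (!b) ∨ a = rvv i ∨ ∃ j k, a = rcv j ∧ C j k = (i, b) := by
  rw [reinfGraph, fromRel_adj] at h
  obtain ⟨-, h | h⟩ := h <;>
  rcases a with ⟨i', b'⟩ | i' | j' | _ <;>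
  simp_all [reinfRel, rlit, rvv, rcv] <;>
  rcases b' with _ | _ <;> rcases b with _ | _ <;> simp_all

section MissedTriangle

variable {i₀ : Fin n} {w : RVert n m} {D : Finset (RVert n m)}

lemma exists_rcv_mem_of_triangle_missed
    (hD : IsDomSet (reinfGraph C ⊔ fromEdgeSet {s(rvv i₀, w)}) D) (hw : w ∈ D)
    (hmiss : ∀ x, triangleIdx x = some i₀ → x ∉ D) (b : Bool) :
    ∃ j, rcv j ∈ D ∧ ∃ k, C j k = (i₀, b) := by
  obtain ⟨y, hy, hyl⟩ := hD.exists_adj_of_ne hw (hmiss (rlit i₀ b) rfl) (by simp [rlit, rvv])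
  rcases eq_of_adj_rlit hyl with rfl | rfl | ⟨j, k, rfl, hk⟩
  · exact absurd hy (hmiss _ rfl)
  · exact absurd hy (hmiss _ rfl)
  · exact ⟨j, hy, k, hk⟩

lemma triangle_nonempty_of_ne
    (hD : IsDomSet (reinfGraph C ⊔ fromEdgeSet {s(rvv i₀, w)}) D) (hw : w ∈ D) {i : Fin n}
    (hi : i ≠ i₀) : (D.filter (triangleIdx · = some i)).Nonempty := by
  by_cases hv : rvv i ∈ D
  · exact ⟨rvv i, Finset.mem_filter.2 ⟨hv, rfl⟩⟩
  obtain ⟨y, hy, hyv⟩ := hD.exists_adj_of_ne hw hv (by simpa [rvv] using hi)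
  rcases eq_rlit_of_adj_rvv hyv with rfl | rfl <;> exact ⟨_, Finset.mem_filter.2 ⟨hy, rfl⟩⟩

lemma card_gt_of_triangle_missed
    (hD : IsDomSet (reinfGraph C ⊔ fromEdgeSet {s(rvv i₀, w)}) D) (hw : w ∈ D)
    (hmiss : ∀ x, triangleIdx x = some i₀ → x ∉ D)
    (hC : ∀ j k k', (C j k).1 = (C j k').1 → (C j k).2 = (C j k').2) : n < D.card := by
  obtain ⟨j₁, hj₁, k₁, hk₁⟩ := exists_rcv_mem_of_triangle_missed hD hw hmiss true
  obtain ⟨j₂, hj₂, k₂, hk₂⟩ := exists_rcv_mem_of_triangle_missed hD hw hmiss false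
  have hj : j₁ ≠ j₂ := by
    rintro rfl
    simpa [hk₁, hk₂] using hC j₁ k₁ k₂
  have hnone : 1 < (D.filter (triangleIdx · = none)).card :=
    Finset.one_lt_card.2 ⟨rcv j₁, Finset.mem_filter.2 ⟨hj₁, rfl⟩,
      rcv j₂, Finset.mem_filter.2 ⟨hj₂, rfl⟩, by simpa [rcv] using hj⟩
  have hsum : n - 1 ≤ ∑ i, (D.filter (triangleIdx · = some i)).card := by
    calc n - 1 = (Finset.univ.erase i₀).card • 1 := by simp
      _ ≤ ∑ i ∈ Finset.univ.erase i₀, (D.filter (triangleIdx · = some i)).card :=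
          Finset.card_nsmul_le_sum _ _ _ fun i hi => Finset.card_pos.2 <|
            triangle_nonempty_of_ne hD hw (Finset.ne_of_mem_erase hi)
      _ ≤ _ := Finset.sum_le_sum_of_subset (Finset.erase_subset _ _)
  have := D.card_eq_card_filter_none_add_sum triangleIdx
  have := i₀.pos
  omega

end MissedTriangle

lemma triangle_nonempty_of_card_le
    (hC : ∀ j k k', (C j k).1 = (C j k').1 → (C j k).2 = (C j k').2) {u v : RVert n m}
    {D : Finset (RVert n m)} (hD : IsDomSet (reinfGraph C ⊔ fromEdgeSet {s(u, v)}) D)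
    (hcard : D.card ≤ n) (i₀ : Fin n) : (D.filter (triangleIdx · = some i₀)).Nonempty := by
  by_contra hempty
  have hmiss : ∀ x, triangleIdx x = some i₀ → x ∉ D := fun x hx hxD =>
    hempty ⟨x, Finset.mem_filter.2 ⟨hxD, hx⟩⟩
  obtain ⟨w, hw, hedge⟩ : ∃ w ∈ D, s(u, v) = s(rvv i₀, w) := by
    refine (hD.exists_adj_or_sym2_eq (hmiss _ rfl)).resolve_left ?_
    rintro ⟨y, hy, hyv⟩
    rcases eq_rlit_of_adj_rvv hyv with rfl | rfl <;> exact hmiss _ rfl hy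
  rw [hedge] at hD
  exact (card_gt_of_triangle_missed hD hw hmiss hC).not_ge hcard

theorem reinfGraph_addEdge_gammaSet_structure_general {n m : ℕ} (C : Fin m → Fin 3 → Lit n)
    (hC : ∀ j k k', (C j k).1 = (C j k').1 → (C j k).2 = (C j k').2)
    (u v : RVert n m)
    (h : domNum (reinfGraph C ⊔ SimpleGraph.fromEdgeSet {s(u, v)}) = n)
    (D : Finset (RVert n m))
    (hD : IsDomSet (reinfGraph C ⊔ SimpleGraph.fromEdgeSet {s(u, v)}) D)
    (hcard : D.card = domNum (reinfGraph C ⊔ SimpleGraph.fromEdgeSet {s(u, v)})) :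
    (∀ i : Fin n, (D ∩ {rlit i true, rlit i false, rvv i}).card = 1) ∧
      (∀ j : Fin m, rcv j ∉ D) := by
  have hDn : D.card = n := hcard.trans h
  have hhit (i : Fin n) : 1 ≤ (D.filter (triangleIdx · = some i)).card :=
    Finset.card_pos.2 (triangle_nonempty_of_card_le hC hD hDn.le i)
  have hsplit := D.card_eq_card_filter_none_add_sum triangleIdx
  have hsum : n ≤ ∑ i, (D.filter (triangleIdx · = some i)).card := by
    simpa using Finset.card_nsmul_le_sum Finset.univ _ 1 fun i _ => hhit i
  have hnone : D.filter (triangleIdx · = none) = ∅ := Finset.card_eq_zero.1 (by omega)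
  have hone : ∀ i ∈ Finset.univ, 1 = (D.filter (triangleIdx · = some i)).card :=
    (Finset.sum_eq_sum_iff_of_le fun i _ => hhit i).1 (by simp; omega)
  refine ⟨fun i => ?_, fun j hj => ?_⟩
  · rw [← filter_triangleIdx_eq_inter]
    exact (hone i (Finset.mem_univ i)).symm
  · have hmem : rcv j ∈ D.filter (triangleIdx · = none) := Finset.mem_filter.2 ⟨hj, rfl⟩
    simp [hnone] at hmem

/-- In the reinforcement construction (for a 3-SAT instance in which no clause
contains both a variable and its negation), if `e = uv` is a non-edge with
`γ(G + e) = n`, then every minimum dominating set `D` of `G + e` satisfies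
`|D ∩ {uᵢ, ūᵢ, vᵢ}| = 1` for every `i`, and `cⱼ ∉ D` for every `j`. -/
theorem reinfGraph_addEdge_gammaSet_structure {n m : ℕ} (C : Fin m → Fin 3 → Lit n)
    (hC : ∀ j k k', (C j k).1 = (C j k').1 → (C j k).2 = (C j k').2)
    (u v : RVert n m) (huv : u ≠ v) (hadj : ¬ (reinfGraph C).Adj u v)
    (h : domNum (reinfGraph C ⊔ SimpleGraph.fromEdgeSet {s(u, v)}) = n)
    (D : Finset (RVert n m))
    (hD : IsDomSet (reinfGraph C ⊔ SimpleGraph.fromEdgeSet {s(u, v)}) D)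
    (hcard : D.card = domNum (reinfGraph C ⊔ SimpleGraph.fromEdgeSet {s(u, v)})) :
    (∀ i : Fin n, (D ∩ {rlit i true, rlit i false, rvv i}).card = 1) ∧
      (∀ j : Fin m, rcv j ∉ D) :=
  reinfGraph_addEdge_gammaSet_structure_general C hC u v h D hD hcard
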